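/- If f is a morphism on finite words over {1,3} such that f(1) begins with the letter 1, the lengths |f^k(1)| tend to infinity, and the σ-sequence w_σ equals lim_{k→∞} f^k(1), then f(1) begins with the word 1131 and |f(1)| ≥ 5. -/
import Mathlib


open List Filter

/-- `σ(n)`: writing `n = 2^t * (4s + σ)` with `σ ∈ {1,3}` and `2^t` the largest
power of 2 dividing `n`, return `σ` (junk value 0 at `n = 0`). -/
def sigma (n : ℕ) : ℕ := (ordCompl[2] n) % 4

/-- The σ-sequence as an infinite word: its `n`-th letter (0-based) is `σ(n+1)`. -/
def sigmaSeq (n : ℕ) : ℕ := sigma (n + 1)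

/-- A word over the alphabet {1,3}. -/
def Word13 (l : List ℕ) : Prop := ∀ a ∈ l, a = 1 ∨ a = 3

/-- A morphism on finite words over {1,3}. -/
def IsMorphism13 (f : List ℕ → List ℕ) : Prop :=
  (∀ u v, f (u ++ v) = f u ++ f v) ∧ ∀ l, Word13 l → Word13 (f l)

/-- The infinite word `s` is obtained by iterating the morphism `f` on the
letter 1: `f(1)` begins with 1, `|f^k(1)| → ∞`, and `s = lim f^k(1)`. -/
def IterLimit (f : List ℕ → List ℕ) (s : ℕ → ℕ) : Prop :=
  (∃ t, f [1] = 1 :: t) ∧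
  Tendsto (fun k => (f^[k] [1]).length) atTop atTop ∧
  ∀ k n, n < (f^[k] [1]).length → (f^[k] [1]).getD n 0 = s n

lemma sigma_odd' (n : ℕ) (h : n % 2 = 1) : sigma n = n % 4 := by
  unfold sigma
  have h2 : ¬ (2 ∣ n) := by omega
  rw [Nat.factorization_eq_zero_of_not_dvd h2]
  simp

lemma sigma_two_mul (n : ℕ) : sigma (2 * n) = sigma n := by
  unfold sigma
  rw [Nat.ordCompl_mul]
  have : ordCompl[2] 2 = 1 := by
    rw [Nat.Prime.factorization_self Nat.prime_two]; norm_num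
  rw [this, one_mul]

lemma s_odd (k : ℕ) : sigmaSeq (2 * k + 1) = sigmaSeq k := by
  show sigma (2 * k + 1 + 1) = sigma (k + 1)
  have : 2 * k + 1 + 1 = 2 * (k + 1) := by ring
  rw [this, sigma_two_mul]

lemma s_mod4_0 (n : ℕ) (h : n % 4 = 0) : sigmaSeq n = 1 := by
  show sigma (n+1) = 1
  rw [sigma_odd' (n+1) (by omega)]; omega

lemma s_mod4_2 (n : ℕ) (h : n % 4 = 2) : sigmaSeq n = 3 := by
  show sigma (n+1) = 3
  rw [sigma_odd' (n+1) (by omega)]; omega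

lemma even_case : ∀ q : ℕ, q % 2 = 0 → 1 ≤ q → ∃ i < q, sigmaSeq i ≠ sigmaSeq (i + q) := by
  intro q
  induction q using Nat.strong_induction_on with
  | _ q ih =>
    intro h2 h1
    rcases Nat.lt_or_ge (q % 4) 2 with h4 | h4
    · have h40 : q % 4 = 0 := by omega
      obtain ⟨k, hk, hne⟩ := ih (q / 2) (by omega) (by omega) (by omega)
      refine ⟨2 * k + 1, by omega, ?_⟩
      have e1 : 2 * k + 1 + q = 2 * (k + q / 2) + 1 := by omega
      rw [e1, s_odd, s_odd]
      exact hne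
    · have h42 : q % 4 = 2 := by omega
      refine ⟨0, by omega, ?_⟩
      rw [s_mod4_0 0 (by omega), s_mod4_2 (0 + q) (by omega)]
      omega

lemma odd_case (q : ℕ) (h17 : 17 ≤ q) (hodd : q % 2 = 1) :
    ∃ i < q, sigmaSeq i ≠ sigmaSeq (i + q) := by
  by_contra hc
  push_neg at hc
  set c := (q - 1) / 2 with hcdef
  have hq : q = 2 * c + 1 := by omega
  set d := (c + 2) / 8 with hddef
  have hd : c + 2 = 8 * d + (c + 2) % 8 ∧ (c + 2) % 8 < 8 := ⟨(Nat.div_add_mod _ _).symm, Nat.mod_lt _ (by omega)⟩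
  set j := 8 * d + 5 with hjdef
  have hj1 : q ≤ 2 * j + 1 := by omega
  have hj2 : j + 2 ≤ q := by omega
  -- i1 = 2j+1-q, i2 = 2j+3-q
  have hi1 : 2 * j + 1 - q < q := by omega
  have hi2 : 2 * j + 3 - q < q := by omega
  have e1 : sigmaSeq (2 * j + 1 - q) = sigmaSeq j := by
    have := hc (2 * j + 1 - q) hi1
    rw [this]
    have e : 2 * j + 1 - q + q = 2 * j + 1 := by omega
    rw [e, s_odd]
  have e2 : sigmaSeq (2 * j + 3 - q) = sigmaSeq (j + 1) := by
    have := hc (2 * j + 3 - q) hi2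
    rw [this]
    have e : 2 * j + 3 - q + q = 2 * (j + 1) + 1 := by omega
    rw [e, s_odd]
  have vj : sigmaSeq j = 3 := by
    have e : j = 2 * (4 * d + 2) + 1 := by omega
    rw [e, s_odd, s_mod4_2 _ (by omega)]
  have vj1 : sigmaSeq (j + 1) = 3 := by
    rw [s_mod4_2 _ (by omega)]
  have hpar : (2 * j + 1 - q) % 2 = 0 := by omega
  rcases Nat.lt_or_ge ((2 * j + 1 - q) % 4) 2 with h4 | h4
  · have := s_mod4_0 (2 * j + 1 - q) (by omega)
    rw [e1, vj] at this; omega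
  · have := s_mod4_0 (2 * j + 3 - q) (by omega)
    rw [e2, vj1] at this; omega

lemma no_square (q : ℕ) (hq : 6 ≤ q) : ∃ i < q, sigmaSeq i ≠ sigmaSeq (i + q) := by
  rcases Nat.even_or_odd q with he | ho
  · exact even_case q (Nat.even_iff.mp he) (by omega)
  · have hodd : q % 2 = 1 := Nat.odd_iff.mp ho
    rcases Nat.lt_or_ge q 17 with hs | hl
    · -- q ∈ {7,9,11,13,15}
      have v0 : sigmaSeq 0 = 1 := s_mod4_0 0 (by omega)
      have v1 : sigmaSeq 1 = 1 := by have := s_odd 0; rw [v0] at this; simpa using this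
      have v2 : sigmaSeq 2 = 3 := s_mod4_2 2 (by omega)
      have v3 : sigmaSeq 3 = 1 := by have := s_odd 1; rw [v1] at this; simpa using this
      have v4 : sigmaSeq 4 = 1 := s_mod4_0 4 (by omega)
      have v5 : sigmaSeq 5 = 3 := by have := s_odd 2; rw [v2] at this; simpa using this
      have v6 : sigmaSeq 6 = 3 := s_mod4_2 6 (by omega)
      have v7 : sigmaSeq 7 = 1 := by have := s_odd 3; rw [v3] at this; simpa using this
      have v8 : sigmaSeq 8 = 1 := s_mod4_0 8 (by omega)
      have v9 : sigmaSeq 9 = 1 := by have := s_odd 4; rw [v4] at this; simpa using this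
      have v10 : sigmaSeq 10 = 3 := s_mod4_2 10 (by omega)
      have v11 : sigmaSeq 11 = 3 := by have := s_odd 5; rw [v5] at this; simpa using this
      have v13 : sigmaSeq 13 = 3 := by have := s_odd 6; rw [v6] at this; simpa using this
      have v17 : sigmaSeq 17 = 1 := by have := s_odd 8; rw [v8] at this; simpa using this
      have hq5 : q = 7 ∨ q = 9 ∨ q = 11 ∨ q = 13 ∨ q = 15 := by omega
      rcases hq5 with rfl | rfl | rfl | rfl | rfl
      · exact ⟨2, by omega, by norm_num [v2, v9]⟩
      · exact ⟨1, by omega, by norm_num [v1, v10]⟩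
      · exact ⟨0, by omega, by norm_num [v0, v11]⟩
      · exact ⟨0, by omega, by norm_num [v0, v13]⟩
      · exact ⟨2, by omega, by norm_num [v2, v17]⟩
    · exact odd_case q hl hodd

/-- If the σ-sequence is obtained by iterating a morphism `f`, then `f(1)`
begins with the word `1131` and `|f(1)| ≥ 5`. -/
theorem sigma_morphism_starts_with_1131
    (f : List ℕ → List ℕ) (hf : IsMorphism13 f) (hit : IterLimit f sigmaSeq) :
    (∃ t, f [1] = 1 :: 1 :: 3 :: 1 :: t) ∧ 5 ≤ (f [1]).length := by
  obtain ⟨⟨t, ht⟩, htend, hpre⟩ := hit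
  have hcat := hf.1
  have v0 : sigmaSeq 0 = 1 := s_mod4_0 0 (by omega)
  have v1 : sigmaSeq 1 = 1 := by have := s_odd 0; rw [v0] at this; simpa using this
  have v2 : sigmaSeq 2 = 3 := s_mod4_2 2 (by omega)
  have v3 : sigmaSeq 3 = 1 := by have := s_odd 1; rw [v1] at this; simpa using this
  have v5 : sigmaSeq 5 = 3 := by have := s_odd 2; rw [v2] at this; simpa using this
  have ha : ∀ n < (f [1]).length, (f [1]).getD n 0 = sigmaSeq n := by
    have := hpre 1
    simpa using this
  have h2it : f^[2] [1] = f (f [1]) := by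
    rw [Function.iterate_succ_apply', Function.iterate_one]
  have h3it : f^[3] [1] = f (f^[2] [1]) := by
    rw [Function.iterate_succ_apply']
  by_cases h5 : 5 ≤ (f [1]).length
  · have hlt : t.length ≥ 4 := by rw [ht] at h5; simpa using h5
    match t, hlt with
    | x0 :: x1 :: x2 :: r, _ =>
      have e0 : x0 = 1 := by
        have := ha 1 (by rw [ht]; simp)
        rw [ht, v1] at this; simpa [List.getD] using this
      have e1 : x1 = 3 := by
        have := ha 2 (by rw [ht]; simp)
        rw [ht, v2] at this; simpa [List.getD] using this
      have e2 : x2 = 1 := by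
        have := ha 3 (by rw [ht]; simp)
        rw [ht, v3] at this; simpa [List.getD] using this
      subst e0 e1 e2
      exact ⟨⟨r, ht⟩, h5⟩
  · exfalso
    have hlen : (f [1]).length = t.length + 1 := by rw [ht]; simp
    have hl4 : t.length ≤ 3 := by omega
    match t, hl4 with
    | [], _ =>
      have hfix : ∀ k, f^[k] [1] = [1] := fun k => Function.iterate_fixed ht k
      obtain ⟨k, hk⟩ := (htend.eventually_ge_atTop 2).exists
      rw [hfix k] at hk; simp at hk
    | [x0], _ =>
      have e0 : x0 = 1 := by
        have := ha 1 (by rw [ht]; simp)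
        rw [ht, v1] at this; simpa [List.getD] using this
      subst e0
      have hQ : f^[2] [1] = f [1] ++ f [1] := by
        rw [h2it]
        conv_lhs => rw [ht]
        show f ([1] ++ [1]) = _
        rw [hcat]
      have hv : (f^[2] [1]).getD 2 0 = sigmaSeq 2 := by
        apply hpre 2 2
        rw [hQ, ht]; simp
      rw [hQ, ht, v2] at hv
      simp [List.getD] at hv
    | [x0, x1], _ =>
      have e0 : x0 = 1 := by
        have := ha 1 (by rw [ht]; simp)
        rw [ht, v1] at this; simpa [List.getD] using this
      have e1 : x1 = 3 := by
        have := ha 2 (by rw [ht]; simp)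
        rw [ht, v2] at this; simpa [List.getD] using this
      subst e0 e1
      -- m = 3 case : f [1] = [1,1,3]
      have hQ : f^[2] [1] = f [1] ++ (f [1] ++ f [3]) := by
        rw [h2it]
        conv_lhs => rw [ht]
        show f ([1] ++ ([1] ++ [3])) = _
        rw [hcat, hcat]
      set Q := f^[2] [1] with hQdef
      set q := Q.length with hqdef
      have hq6 : 6 ≤ q := by
        rw [hqdef, hQ, ht]; simp
      have h3 : f^[3] [1] = Q ++ (Q ++ f (f [3])) := by
        rw [h3it]
        conv_lhs => rw [hQ]
        rw [hcat, hcat, ← h2it]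
      obtain ⟨i, hi, hne⟩ := no_square q hq6
      have w1 : Q.getD i 0 = sigmaSeq i := hpre 2 i hi
      have w2 : (f^[3] [1]).getD (i + q) 0 = sigmaSeq (i + q) := by
        apply hpre 3
        rw [h3]
        simp only [List.length_append]
        omega
      rw [h3, List.getD_append_right Q (Q ++ f (f [3])) 0 (i + q) (by omega),
        show i + q - Q.length = i by omega,
        List.getD_append Q (f (f [3])) 0 i hi, w1] at w2
      exact hne w2
    | [x0, x1, x2], _ =>
      have e0 : x0 = 1 := by
        have := ha 1 (by rw [ht]; simp)
        rw [ht, v1] at this; simpa [List.getD] using this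
      have e1 : x1 = 3 := by
        have := ha 2 (by rw [ht]; simp)
        rw [ht, v2] at this; simpa [List.getD] using this
      have e2 : x2 = 1 := by
        have := ha 3 (by rw [ht]; simp)
        rw [ht, v3] at this; simpa [List.getD] using this
      subst e0 e1 e2
      -- m = 4 : f [1] = [1,1,3,1]
      have hal : (f [1]).length = 4 := by rw [ht]; rfl
      have hQ : f^[2] [1] = f [1] ++ (f [1] ++ f [3, 1]) := by
        rw [h2it]
        conv_lhs => rw [ht]
        show f ([1] ++ ([1] ++ [3, 1])) = _
        rw [hcat, hcat]
      have hv : (f^[2] [1]).getD 5 0 = sigmaSeq 5 := by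
        apply hpre 2 5
        rw [hQ]
        simp only [List.length_append]
        omega
      rw [hQ, List.getD_append_right (f [1]) (f [1] ++ f [3, 1]) 0 5 (by omega),
        show 5 - (f [1]).length = 1 by omega,
        List.getD_append (f [1]) (f [3, 1]) 0 1 (by omega), v5, ht] at hv
      simp [List.getD] at hv
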